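/- arXiv:1403.7434 — 8 statements merged into one kernel-verified Lean document; each statement's English description precedes it below -/
import Mathlib

section
/- Let N > 1 be a natural number, let a : Fin N → ℕ be non-negative integers, m : Fin N → ℕ be positive integers, and c : Fin N → ℝ be positive real numbers. Define f : (Fin N → ℝ) → ℝ away from the origin by f(x) = (∏ i, x i ^ a i) / (∑ i, c i * x i ^ (2 * m i)). Then there exists a real number L such that f(x) tends to L as x tends to 0 along nonzero points if and only if ∑ i, (a i : ℝ) / (2 * m i) > 1. -/
open Filter

theorem stmt_0 (N : ℕ) (hN : 1 < N) (a : Fin N → ℕ) (m : Fin N → ℕ)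
    (hm : ∀ i, 0 < m i) (c : Fin N → ℝ) (hc : ∀ i, 0 < c i) :
    (∃ L : ℝ, Tendsto (fun x : Fin N → ℝ =>
        (∏ i, x i ^ a i) / (∑ i, c i * x i ^ (2 * m i)))
      (nhdsWithin 0 {x : Fin N → ℝ | x ≠ 0}) (nhds L)) ↔
    ∑ i, (a i : ℝ) / (2 * m i) > 1 := by
  have h2m : ∀ i, 0 < 2 * m i := fun i => by have := hm i; omega
  have hpow_nonneg : ∀ (y : ℝ) (i : Fin N), 0 ≤ y ^ (2 * m i) := fun y i => by
    rw [pow_mul]; exact pow_nonneg (sq_nonneg y) _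
  have hpow_pos : ∀ (y : ℝ) (i : Fin N), y ≠ 0 → 0 < y ^ (2 * m i) := fun y i hy => by
    rw [pow_mul]; exact pow_pos (by positivity) _
  haveI : Nonempty (Fin N) := ⟨⟨0, by omega⟩⟩
  have hcsum : 0 < ∑ i, c i := Finset.sum_pos (fun i _ => hc i) Finset.univ_nonempty
  set D : (Fin N → ℝ) → ℝ := fun x => ∑ i, c i * x i ^ (2 * m i) with hD
  have hDpos : ∀ x : Fin N → ℝ, x ≠ 0 → 0 < D x := by
    intro x hx
    obtain ⟨j, hj⟩ : ∃ j, x j ≠ 0 := by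
      by_contra h; push_neg at h; exact hx (funext h)
    refine Finset.sum_pos' (fun i _ => ?_) ⟨j, Finset.mem_univ j, ?_⟩
    · exact mul_nonneg (hc i).le (hpow_nonneg _ i)
    · exact mul_pos (hc j) (hpow_pos _ j hj)
  constructor
  · rintro ⟨L, hL⟩
    by_contra hle
    push_neg at hle
    -- set up exponents
    set M : ℕ := ∏ i, (2 * m i) with hM
    have hMpos : 0 < M := Finset.prod_pos (fun i _ => h2m i)
    have hdvd : ∀ i, (2 * m i) ∣ M := fun i => Finset.dvd_prod_of_mem _ (Finset.mem_univ i)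
    set k : Fin N → ℕ := fun i => M / (2 * m i) with hkdef
    have hk : ∀ i, k i * (2 * m i) = M := fun i => Nat.div_mul_cancel (hdvd i)
    have hkpos : ∀ i, 0 < k i :=
      fun i => Nat.div_pos (Nat.le_of_dvd hMpos (hdvd i)) (h2m i)
    set A : ℕ := ∑ i, a i * k i with hA
    have hsum : ∑ i, (a i : ℝ) / (2 * m i) = (A : ℝ) / M := by
      rw [hA]
      push_cast
      rw [Finset.sum_div]
      refine Finset.sum_congr rfl (fun i _ => ?_)
      have hMeq : (M : ℝ) = (2 * m i : ℕ) * (k i : ℕ) := by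
        exact_mod_cast (by rw [mul_comm]; exact (hk i).symm)
      rw [hMeq]
      push_cast
      rw [mul_div_mul_right _ _ (by exact_mod_cast (hkpos i).ne' : ((k i : ℝ)) ≠ 0)]
    have hAM : A ≤ M := by
      have : (A : ℝ) / M ≤ 1 := hsum ▸ hle
      have : (A : ℝ) ≤ M := by
        rw [div_le_one (by exact_mod_cast hMpos)] at this; exact this
      exact_mod_cast this
    -- the curve γ
    set γ : ℝ → (Fin N → ℝ) := fun t i => t ^ (k i) with hγ
    have hγtend : Tendsto γ (nhdsWithin 0 (Set.Ioi 0)) (nhdsWithin 0 {x : Fin N → ℝ | x ≠ 0}) := by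
      rw [tendsto_nhdsWithin_iff]
      constructor
      · refine Tendsto.mono_left ?_ nhdsWithin_le_nhds
        rw [tendsto_pi_nhds]
        intro i
        have := (continuous_pow (k i)).tendsto (0 : ℝ)
        simpa [zero_pow (hkpos i).ne'] using this
      · filter_upwards [self_mem_nhdsWithin] with t ht
        intro h0
        have : γ t ⟨0, by omega⟩ = 0 := congrFun h0 _
        have : t ^ (k ⟨0, by omega⟩) = 0 := this
        exact absurd this (pow_pos ht _).ne'
    have hcomp : Tendsto (fun t => (∏ i, γ t i ^ a i) / (∑ i, c i * γ t i ^ (2 * m i)))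
        (nhdsWithin 0 (Set.Ioi 0)) (nhds L) := hL.comp hγtend
    have hval : ∀ t : ℝ, (∏ i, γ t i ^ a i) / (∑ i, c i * γ t i ^ (2 * m i))
        = t ^ A / (t ^ M * ∑ i, c i) := by
      intro t
      have hnum : (∏ i, γ t i ^ a i) = t ^ A := by
        simp only [hγ, ← pow_mul, hA]
        rw [Finset.prod_pow_eq_pow_sum]
        congr 1
        exact Finset.sum_congr rfl (fun i _ => by ring)
      have hden : (∑ i, c i * γ t i ^ (2 * m i)) = t ^ M * ∑ i, c i := by
        simp only [hγ, ← pow_mul, hk]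
        rw [Finset.mul_sum]
        exact Finset.sum_congr rfl (fun i _ => by ring)
      rw [hnum, hden]
    rcases lt_or_eq_of_le hAM with hlt | heq
    · -- A < M : f ∘ γ → atTop
      have htop : Tendsto (fun t => (∏ i, γ t i ^ a i) / (∑ i, c i * γ t i ^ (2 * m i)))
          (nhdsWithin 0 (Set.Ioi 0)) atTop := by
        have h1 : Tendsto (fun t : ℝ => t ^ (M - A)) (nhdsWithin 0 (Set.Ioi 0))
            (nhdsWithin 0 (Set.Ioi 0)) := by
          rw [tendsto_nhdsWithin_iff]
          constructor
          · refine Tendsto.mono_left ?_ nhdsWithin_le_nhds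
            have := (continuous_pow (M - A)).tendsto (0 : ℝ)
            simpa [zero_pow (by omega : M - A ≠ 0)] using this
          · filter_upwards [self_mem_nhdsWithin] with t ht
            exact pow_pos (Set.mem_Ioi.mp ht) _
        have h2 : Tendsto (fun t : ℝ => (t ^ (M - A))⁻¹) (nhdsWithin 0 (Set.Ioi 0)) atTop :=
          tendsto_inv_nhdsGT_zero.comp h1
        have h3 : Tendsto (fun t : ℝ => (∑ i, c i)⁻¹ * (t ^ (M - A))⁻¹)
            (nhdsWithin 0 (Set.Ioi 0)) atTop := h2.const_mul_atTop (inv_pos.mpr hcsum)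
        refine h3.congr' ?_
        filter_upwards [self_mem_nhdsWithin] with t ht
        rw [hval t]
        have htpos : (0:ℝ) < t := ht
        have : t ^ M = t ^ A * t ^ (M - A) := by rw [← pow_add]; congr 1; omega
        rw [this]
        field_simp
      exact not_tendsto_nhds_of_tendsto_atTop htop L hcomp
    · -- A = M : limit along γ is (∑ c)⁻¹, but limit along axis is 0
      have hLc : L = (∑ i, c i)⁻¹ := by
        refine tendsto_nhds_unique hcomp ?_
        refine Tendsto.congr' ?_ tendsto_const_nhds
        filter_upwards [self_mem_nhdsWithin] with t ht
        rw [hval t, heq]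
        have htpos : (0:ℝ) < t := ht
        have h1 : t ^ M ≠ 0 := (pow_pos htpos M).ne'
        rw [eq_comm]
        field_simp
      -- some a i0 > 0
      obtain ⟨i0, hi0⟩ : ∃ i0, 0 < a i0 := by
        by_contra h
        push_neg at h
        have : A = 0 := by
          rw [hA]; apply Finset.sum_eq_zero; intro i _
          have : a i = 0 := Nat.le_zero.mp (h i)
          simp [this]
        omega
      -- pick j ≠ i0
      obtain ⟨j, hj⟩ : ∃ j : Fin N, j ≠ i0 := by
        rcases eq_or_ne i0 ⟨0, by omega⟩ with h | h
        · exact ⟨⟨1, by omega⟩, by rw [h]; simp [Fin.ext_iff]⟩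
        · exact ⟨⟨0, by omega⟩, fun hh => h hh.symm⟩
      set η : ℝ → (Fin N → ℝ) := fun t i => if i = j then t else 0 with hη
      have hηtend : Tendsto η (nhdsWithin 0 (Set.Ioi 0))
          (nhdsWithin 0 {x : Fin N → ℝ | x ≠ 0}) := by
        rw [tendsto_nhdsWithin_iff]
        constructor
        · refine Tendsto.mono_left ?_ nhdsWithin_le_nhds
          rw [tendsto_pi_nhds]
          intro i
          rcases eq_or_ne i j with h | h
          · simpa [hη, h] using (continuous_id'.tendsto (0:ℝ))
          · simpa [hη, h] using (tendsto_const_nhds : Tendsto (fun _ : ℝ => (0:ℝ)) _ _)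
        · filter_upwards [self_mem_nhdsWithin] with t ht
          intro h0
          have : η t j = 0 := congrFun h0 j
          rw [hη] at this
          simp at this
          exact absurd this (ne_of_gt ht)
      have hcomp2 : Tendsto (fun t => (∏ i, η t i ^ a i) / (∑ i, c i * η t i ^ (2 * m i)))
          (nhdsWithin 0 (Set.Ioi 0)) (nhds L) := hL.comp hηtend
      have hzero : ∀ t : ℝ, (∏ i, η t i ^ a i) = 0 := by
        intro t
        apply Finset.prod_eq_zero (Finset.mem_univ i0)
        rw [hη]
        simp only [if_neg (Ne.symm hj) ]
        exact zero_pow hi0.ne'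
      have hL0 : L = 0 := by
        refine tendsto_nhds_unique hcomp2 ?_
        refine Tendsto.congr' ?_ tendsto_const_nhds
        filter_upwards [self_mem_nhdsWithin] with t ht
        rw [hzero t, zero_div]
      rw [hL0] at hLc
      exact absurd hLc.symm (ne_of_gt (inv_pos.mpr hcsum))
  · -- reverse direction: limit is 0
    intro hgt
    refine ⟨0, ?_⟩
    set s : ℝ := ∑ i, (a i : ℝ) / (2 * m i) with hs
    set C : ℝ := ∏ i, (c i) ^ ((a i : ℝ) / (2 * m i)) with hC
    have hCpos : 0 < C := Finset.prod_pos (fun i _ => Real.rpow_pos_of_pos (hc i) _)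
    have hbound : ∀ x : Fin N → ℝ, x ≠ 0 →
        |(∏ i, x i ^ a i)| ≤ D x ^ s / C := by
      intro x hx
      have hDx : 0 < D x := hDpos x hx
      have hstep : ∀ i, |x i| ^ a i ≤ (D x / c i) ^ ((a i : ℝ) / (2 * m i)) := by
        intro i
        have hle : x i ^ (2 * m i) ≤ D x / c i := by
          rw [le_div_iff₀ (hc i), mul_comm]
          exact Finset.single_le_sum
            (fun i _ => mul_nonneg (hc i).le (hpow_nonneg _ i)) (Finset.mem_univ i)
        have h1 : |x i| ^ a i = (x i ^ (2 * m i)) ^ ((a i : ℝ) / (2 * m i)) := by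
          have habs : x i ^ (2 * m i) = |x i| ^ (2 * m i) := by
            rw [← abs_pow, abs_of_nonneg (hpow_nonneg _ i)]
          rw [habs, ← Real.rpow_natCast (|x i|) (2 * m i),
            ← Real.rpow_mul (abs_nonneg _), ← Real.rpow_natCast (|x i|) (a i)]
          congr 1
          have : ((2 * m i : ℕ) : ℝ) ≠ 0 := by exact_mod_cast (h2m i).ne'
          push_cast
          field_simp
          have h2 : (2 * (m i : ℝ)) ≠ 0 := by
            have : (0:ℝ) < m i := by exact_mod_cast hm i
            positivity
          have hm' : (m i : ℝ) ≠ 0 := by exact_mod_cast (hm i).ne'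
          rw [mul_div_assoc, div_self hm', mul_one]
        rw [h1]
        exact Real.rpow_le_rpow (hpow_nonneg _ i) hle (by positivity)
      calc |(∏ i, x i ^ a i)| = ∏ i, |x i| ^ a i := by
              rw [Finset.abs_prod]
              exact Finset.prod_congr rfl (fun i _ => abs_pow _ _)
        _ ≤ ∏ i, (D x / c i) ^ ((a i : ℝ) / (2 * m i)) := by
              refine Finset.prod_le_prod (fun i _ => by positivity) (fun i _ => hstep i)
        _ = D x ^ s / C := by
              rw [hs, hC, Real.rpow_sum_of_pos hDx, ← Finset.prod_div_distrib]
              exact Finset.prod_congr rfl (fun i _ =>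
                Real.div_rpow hDx.le (hc i).le _)
    -- D tends to 0
    have hDcont : Continuous D := by
      apply continuous_finset_sum
      intro i _
      exact (continuous_const.mul ((continuous_apply i).pow _))
    have hD0 : D 0 = 0 := by
      simp only [hD, Pi.zero_apply]
      apply Finset.sum_eq_zero
      intro i _
      rw [zero_pow (h2m i).ne', mul_zero]
    have hDt : Tendsto D (nhdsWithin 0 {x : Fin N → ℝ | x ≠ 0}) (nhds 0) := by
      have := hDcont.tendsto 0
      rw [hD0] at this
      exact this.mono_left nhdsWithin_le_nhds
    have hspos : 0 < s - 1 := by rw [hs]; linarith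
    have hrp : Tendsto (fun y : ℝ => y ^ (s - 1)) (nhds 0) (nhds 0) := by
      have := (Real.continuousAt_rpow_const 0 (s - 1) (Or.inr hspos.le)).tendsto
      rwa [Real.zero_rpow hspos.ne'] at this
    have hg : Tendsto (fun x => D x ^ (s - 1) / C)
        (nhdsWithin 0 {x : Fin N → ℝ | x ≠ 0}) (nhds 0) := by
      have := (hrp.comp hDt).div_const C
      simpa using this
    refine squeeze_zero_norm' ?_ hg
    filter_upwards [self_mem_nhdsWithin] with x hx
    have hxne : x ≠ 0 := hx
    have hDx : 0 < D x := hDpos x hxne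
    rw [Real.norm_eq_abs, abs_div, abs_of_pos hDx, div_le_div_iff₀ hDx (by positivity)]
    calc |(∏ i, x i ^ a i)| * C ≤ (D x ^ s / C) * C := by
          exact mul_le_mul_of_nonneg_right (hbound x hxne) hCpos.le
      _ = D x ^ s := by field_simp
      _ = D x ^ (s - 1) * D x := by
          rw [← Real.rpow_add_one hDx.ne']; ring_nf
end

section
/- Let N > 1 be a natural number, let a : Fin N → ℕ be non-negative integers and m : Fin N → ℕ be positive integers with ∑ i, (a i : ℝ) / (2 * m i) > 1. Then the function f(x) = (∏ i, x i ^ a i) / (∑ i, x i ^ (2 * m i)) tends to 0 as x tends to 0 along nonzero points of ℝ^N. -/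
open Filter

theorem stmt_1 (N : ℕ) (hN : 1 < N) (a : Fin N → ℕ) (m : Fin N → ℕ)
    (hm : ∀ i, 0 < m i) (hsum : ∑ i, (a i : ℝ) / (2 * m i) > 1) :
    Tendsto (fun x : Fin N → ℝ =>
        (∏ i, x i ^ a i) / (∑ i, x i ^ (2 * m i)))
      (nhdsWithin 0 {x : Fin N → ℝ | x ≠ 0}) (nhds 0) := by
  set σ : ℝ := ∑ i, (a i : ℝ) / (2 * m i) with hσ
  have hσ1 : 1 < σ := hsum
  set S : (Fin N → ℝ) → ℝ := fun x => ∑ i, x i ^ (2 * m i) with hSdef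
  have hSpos : ∀ x : Fin N → ℝ, x ≠ 0 → 0 < S x := by
    intro x hx
    obtain ⟨i, hi⟩ := Function.ne_iff.mp hx
    exact Finset.sum_pos' (fun j _ => (even_two_mul _).pow_nonneg _)
      ⟨i, Finset.mem_univ i, (even_two_mul _).pow_pos hi⟩
  have hbound : ∀ x : Fin N → ℝ, x ≠ 0 →
      ‖(∏ i, x i ^ a i) / S x‖ ≤ (S x) ^ (σ - 1) := by
    intro x hx
    have hSx := hSpos x hx
    have h1 : |∏ i, x i ^ a i| ≤ (S x) ^ σ := by
      rw [Finset.abs_prod, hσ, Real.rpow_sum_of_pos hSx]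
      apply Finset.prod_le_prod (fun i _ => abs_nonneg _)
      intro i _
      have hxb : |x i| ≤ (S x) ^ ((2 * m i : ℝ)⁻¹) := by
        have hterm : |x i| ^ (2 * m i) ≤ S x := by
          rw [← abs_pow, abs_of_nonneg ((even_two_mul _).pow_nonneg _)]
          exact Finset.single_le_sum (fun j _ => (even_two_mul _).pow_nonneg (x j))
            (Finset.mem_univ i)
        have := Real.rpow_le_rpow (pow_nonneg (abs_nonneg _) _) hterm
          (by positivity : (0:ℝ) ≤ ((2 * m i : ℕ) : ℝ)⁻¹)
        rwa [Real.pow_rpow_inv_natCast (abs_nonneg _) (by have := hm i; omega), Nat.cast_mul,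
          Nat.cast_ofNat] at this
      calc |x i ^ a i| = |x i| ^ (a i : ℝ) := by
            rw [abs_pow, ← Real.rpow_natCast]
        _ ≤ ((S x) ^ ((2 * m i : ℝ)⁻¹)) ^ (a i : ℝ) :=
            Real.rpow_le_rpow (abs_nonneg _) hxb (by positivity)
        _ = (S x) ^ ((a i : ℝ) / (2 * m i)) := by
            rw [← Real.rpow_mul hSx.le, inv_mul_eq_div]
    rw [norm_div, Real.norm_eq_abs, Real.norm_eq_abs, abs_of_pos hSx, div_le_iff₀ hSx,
      Real.rpow_sub hSx, Real.rpow_one, div_mul_cancel₀]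
    · exact h1
    · exact hSx.ne'
  have hStend : Tendsto S (nhdsWithin 0 {x : Fin N → ℝ | x ≠ 0}) (nhds 0) := by
    have hc : Continuous S := by
      apply continuous_finset_sum
      intro i _
      exact (continuous_apply i).pow _
    have hS0 : S 0 = 0 := by
      simp only [hSdef, Pi.zero_apply]
      rw [Finset.sum_eq_zero]
      intro i _
      exact zero_pow (by have := hm i; omega)
    exact (hc.tendsto' 0 0 hS0).mono_left nhdsWithin_le_nhds
  have hgtend : Tendsto (fun x => (S x) ^ (σ - 1))
      (nhdsWithin 0 {x : Fin N → ℝ | x ≠ 0}) (nhds 0) := by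
    have hca : ContinuousAt (fun s : ℝ => s ^ (σ - 1)) 0 :=
      Real.continuousAt_rpow_const 0 (σ - 1) (Or.inr (by linarith))
    have h0 : (0:ℝ) ^ (σ - 1) = 0 := Real.zero_rpow (by linarith)
    exact (h0 ▸ hca.tendsto).comp hStend
  apply squeeze_zero_norm' _ hgtend
  filter_upwards [self_mem_nhdsWithin] with x hx
  exact hbound x hx
end

section
/- Let N > 1 be a natural number, let a : Fin N → ℕ be non-negative integers, m : Fin N → ℕ be positive integers, and c : Fin N → ℝ be positive real numbers. If there exists a real number L such that f(x) = (∏ i, x i ^ a i) / (∑ i, c i * x i ^ (2 * m i)) tends to L as x tends to 0 along nonzero points of ℝ^N, then ∑ i, (a i : ℝ) / (2 * m i) > 1. -/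
open Filter

theorem stmt_2 (N : ℕ) (hN : 1 < N) (a : Fin N → ℕ) (m : Fin N → ℕ)
    (hm : ∀ i, 0 < m i) (c : Fin N → ℝ) (hc : ∀ i, 0 < c i)
    (hL : ∃ L : ℝ, Tendsto (fun x : Fin N → ℝ =>
        (∏ i, x i ^ a i) / (∑ i, c i * x i ^ (2 * m i)))
      (nhdsWithin 0 {x : Fin N → ℝ | x ≠ 0}) (nhds L)) :
    ∑ i, (a i : ℝ) / (2 * m i) > 1 := by
  obtain ⟨L, hL⟩ := hL
  set f : (Fin N → ℝ) → ℝ := fun x =>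
    (∏ i, x i ^ a i) / (∑ i, c i * x i ^ (2 * m i)) with hf
  set M : ℕ := ∏ i, m i with hM
  have hMpos : 0 < M := Finset.prod_pos (fun i _ => hm i)
  set K : Fin N → ℕ := fun i => M / m i with hK
  have hdvd : ∀ i : Fin N, m i ∣ M := fun i => Finset.dvd_prod_of_mem m (Finset.mem_univ i)
  have hKm : ∀ i, K i * m i = M := fun i => Nat.div_mul_cancel (hdvd i)
  have hKpos : ∀ i, 0 < K i := fun i => Nat.div_pos (Nat.le_of_dvd hMpos (hdvd i)) (hm i)
  set A : ℕ := ∑ i, K i * a i with hA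
  set C : ℝ := ∑ i, c i with hC
  have hCpos : 0 < C := Finset.sum_pos (fun i _ => hc i) ⟨⟨0, by omega⟩, Finset.mem_univ _⟩
  -- diagonal path
  set p : ℝ → (Fin N → ℝ) := fun t i => t ^ (K i) with hp
  have hpt : Tendsto p (nhdsWithin 0 (Set.Ioi 0)) (nhdsWithin 0 {x : Fin N → ℝ | x ≠ 0}) := by
    rw [tendsto_nhdsWithin_iff]
    constructor
    · apply Tendsto.mono_left _ nhdsWithin_le_nhds
      rw [tendsto_pi_nhds]
      intro i
      have h1 : Tendsto (fun t : ℝ => t ^ K i) (nhds 0) (nhds ((0:ℝ) ^ K i)) :=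
        (continuous_pow (K i)).continuousAt
      have h2 : ((0:ℝ) ^ K i) = (0 : Fin N → ℝ) i := by
        simp [zero_pow (hKpos i).ne']
      rw [← h2]
      exact h1
    · filter_upwards [self_mem_nhdsWithin] with t ht
      intro h
      have h0 := congrFun h ⟨0, by omega⟩
      simp only [p, Pi.zero_apply] at h0
      exact absurd h0 (pow_ne_zero _ (ne_of_gt ht))
  have hfp : ∀ t ∈ Set.Ioi (0:ℝ), f (p t) = t ^ A / (t ^ (2 * M) * C) := by
    intro t ht
    have h1 : (∏ i, (p t) i ^ a i) = t ^ A := by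
      rw [hA, ← Finset.prod_pow_eq_pow_sum]
      exact Finset.prod_congr rfl fun i _ => by simp only [p]; rw [← pow_mul]
    have h2 : (∑ i, c i * (p t) i ^ (2 * m i)) = t ^ (2 * M) * C := by
      rw [hC, Finset.mul_sum]
      refine Finset.sum_congr rfl fun i _ => ?_
      simp only [p]
      rw [← pow_mul, mul_comm (c i)]
      congr 1
      rw [← hKm i]; ring
    simp only [hf, h1, h2]
  have hdiag : Tendsto (fun t : ℝ => t ^ A / (t ^ (2 * M) * C)) (nhdsWithin 0 (Set.Ioi 0)) (nhds L) := by
    apply (hL.comp hpt).congr'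
    filter_upwards [self_mem_nhdsWithin] with t ht
    exact hfp t ht
  have hAM : 2 * M < A := by
    rcases lt_trichotomy A (2 * M) with h | h | h
    · exfalso
      set e : ℕ := 2 * M - A with he
      have hepos : 0 < e := by omega
      have hmul : Tendsto (fun t : ℝ => t ^ e * (t ^ A / (t ^ (2 * M) * C)))
          (nhdsWithin 0 (Set.Ioi 0)) (nhds (0 * L)) := by
        apply Tendsto.mul _ hdiag
        apply Tendsto.mono_left _ nhdsWithin_le_nhds
        have := (continuous_pow e).tendsto (0:ℝ)
        simpa [zero_pow hepos.ne'] using this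
      have hconst : Tendsto (fun _ : ℝ => 1 / C) (nhdsWithin 0 (Set.Ioi 0)) (nhds (0 * L)) := by
        apply hmul.congr'
        filter_upwards [self_mem_nhdsWithin] with t ht
        have htne : (t : ℝ) ≠ 0 := ne_of_gt ht
        have : t ^ e * (t ^ A / (t ^ (2 * M) * C)) = 1 / C := by
          rw [mul_div_assoc', ← pow_add]
          have : e + A = 2 * M := by omega
          rw [this]
          rw [div_eq_div_iff (by positivity) hCpos.ne']
          ring
        exact this
      have := tendsto_nhds_unique hconst tendsto_const_nhds
      rw [zero_mul] at this
      exact absurd this.symm (by positivity)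
    · exfalso
      -- A = 2M > 0, so some a j > 0
      have hApos : 0 < A := by omega
      have : ∃ j, 0 < K j * a j := by
        by_contra hcon
        push_neg at hcon
        have hz : A = 0 := by
          rw [hA]
          exact Finset.sum_eq_zero fun i _ => Nat.le_zero.mp (hcon i)
        omega
      obtain ⟨j, hj⟩ := this
      have haj : 0 < a j := by
        rcases Nat.eq_zero_or_pos (a j) with h0 | h0
        · simp [h0] at hj
        · exact h0
      obtain ⟨k, hk⟩ : ∃ k : Fin N, k ≠ j := by
        have : Nontrivial (Fin N) := Fin.nontrivial_iff_two_le.mpr hN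
        exact exists_ne j
      set q : ℝ → (Fin N → ℝ) := fun t i => if i = k then t else 0 with hq
      have hqt : Tendsto q (nhdsWithin 0 (Set.Ioi 0)) (nhdsWithin 0 {x : Fin N → ℝ | x ≠ 0}) := by
        rw [tendsto_nhdsWithin_iff]
        constructor
        · apply Tendsto.mono_left _ nhdsWithin_le_nhds
          rw [tendsto_pi_nhds]
          intro i
          by_cases hik : i = k
          · simp only [q, hik, if_pos rfl, Pi.zero_apply]
            exact tendsto_id
          · simp only [q, if_neg hik, Pi.zero_apply]
            exact tendsto_const_nhds
        · filter_upwards [self_mem_nhdsWithin] with t ht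
          intro h
          have h0 := congrFun h k
          simp only [q, if_pos rfl, Pi.zero_apply] at h0
          exact absurd h0 (ne_of_gt ht)
      have hfq : ∀ t : ℝ, f (q t) = 0 := by
        intro t
        have : (∏ i, (q t) i ^ a i) = 0 := by
          apply Finset.prod_eq_zero (Finset.mem_univ j)
          simp only [q, if_neg (Ne.symm hk)]
          exact zero_pow haj.ne'
        simp only [hf, this, zero_div]
      have hL0 : L = 0 := by
        have h1 : Tendsto (fun t : ℝ => f (q t)) (nhdsWithin 0 (Set.Ioi 0)) (nhds L) :=
          hL.comp hqt
        have h2 : Tendsto (fun _ : ℝ => (0:ℝ)) (nhdsWithin 0 (Set.Ioi 0)) (nhds L) := by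
          apply h1.congr fun t => hfq t
        exact tendsto_nhds_unique h2 tendsto_const_nhds
      have hconst : Tendsto (fun _ : ℝ => 1 / C) (nhdsWithin 0 (Set.Ioi 0)) (nhds L) := by
        apply hdiag.congr'
        filter_upwards [self_mem_nhdsWithin] with t ht
        have htne : (t:ℝ) ≠ 0 := ne_of_gt ht
        rw [h, div_eq_div_iff (by positivity) hCpos.ne']
        ring
      have := tendsto_nhds_unique hconst tendsto_const_nhds
      rw [hL0] at this
      exact absurd this.symm (by positivity)
    · exact h
  -- conclude
  have hsum : ∑ i, (a i : ℝ) / (2 * m i) = (A : ℝ) / (2 * M) := by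
    rw [hA]
    push_cast
    rw [Finset.sum_div]
    refine Finset.sum_congr rfl fun i _ => ?_
    have hmi := hm i
    have hkm : ((K i : ℝ) * m i) = M := by exact_mod_cast hKm i
    rw [div_eq_div_iff (by positivity) (by positivity)]
    linear_combination (-2 : ℝ) * (a i : ℝ) * hkm
  rw [gt_iff_lt, hsum, lt_div_iff₀ (by positivity)]
  have : (2 * M : ℝ) < A := by exact_mod_cast hAM
  linarith
end

section
/- Let N > 1 be a natural number, let a : Fin N → ℕ be non-negative integers, m : Fin N → ℕ be positive integers, and c : Fin N → ℝ be positive real numbers. If f(x) = (∏ i, x i ^ a i) / (∑ i, c i * x i ^ (2 * m i)) tends to some real number L as x tends to 0 along nonzero points of ℝ^N, then L = 0. -/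
open Filter

theorem stmt_3 (N : ℕ) (hN : 1 < N) (a : Fin N → ℕ) (m : Fin N → ℕ)
    (hm : ∀ i, 0 < m i) (c : Fin N → ℝ) (hc : ∀ i, 0 < c i) (L : ℝ)
    (hL : Tendsto (fun x : Fin N → ℝ =>
        (∏ i, x i ^ a i) / (∑ i, c i * x i ^ (2 * m i)))
      (nhdsWithin 0 {x : Fin N → ℝ | x ≠ 0}) (nhds L)) :
    L = 0 := by
  classical
  haveI : Nontrivial (Fin N) := Fin.nontrivial_iff_two_le.mpr hN
  -- key: a curve along axis k tends to 0 within nonzero points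
  have key : ∀ k : Fin N,
      Tendsto (fun t : ℝ => (Pi.single k t : Fin N → ℝ))
        (nhdsWithin 0 {t : ℝ | t ≠ 0}) (nhdsWithin 0 {x : Fin N → ℝ | x ≠ 0}) := by
    intro k
    rw [tendsto_nhdsWithin_iff]
    constructor
    · have hcont : Continuous (fun t : ℝ => (Pi.single k t : Fin N → ℝ)) := by
        apply continuous_pi
        intro i
        simp only [Pi.single_apply]
        by_cases h : i = k
        · simpa [h] using continuous_id'
        · simpa [h] using continuous_const
      have := hcont.tendsto 0
      simpa using this.mono_left nhdsWithin_le_nhds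
    · filter_upwards [self_mem_nhdsWithin] with t ht
      intro h
      apply ht
      have := congrFun h k
      simpa using this
  have hset : {t : ℝ | t ≠ 0} = ({0}ᶜ : Set ℝ) := by ext t; simp
  haveI : (nhdsWithin (0:ℝ) {t : ℝ | t ≠ 0}).NeBot := by rw [hset]; infer_instance
  by_cases hA : ∃ j, a j ≠ 0
  · obtain ⟨j, hj⟩ := hA
    obtain ⟨k, hk⟩ := exists_ne j
    have hL2 := hL.comp (key k)
    have heq : (fun t : ℝ => (∏ i, (Pi.single k t : Fin N → ℝ) i ^ a i) /
        (∑ i, c i * (Pi.single k t : Fin N → ℝ) i ^ (2 * m i))) = fun _ => (0:ℝ) := by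
      funext t
      have : (∏ i, (Pi.single k t : Fin N → ℝ) i ^ a i) = 0 := by
        apply Finset.prod_eq_zero (Finset.mem_univ j)
        rw [Pi.single_apply, if_neg (by exact fun h => hk h.symm)]
        exact zero_pow hj
      rw [this, zero_div]
    rw [Function.comp_def] at hL2
    rw [heq] at hL2
    exact tendsto_nhds_unique hL2 tendsto_const_nhds
  · push_neg at hA
    set k : Fin N := ⟨0, by omega⟩
    have hL2 := hL.comp (key k)
    rw [Function.comp_def] at hL2
    have heq : (fun t : ℝ => (∏ i, (Pi.single k t : Fin N → ℝ) i ^ a i) /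
        (∑ i, c i * (Pi.single k t : Fin N → ℝ) i ^ (2 * m i))) =
        fun t : ℝ => (c k * t ^ (2 * m k))⁻¹ := by
      funext t
      have h1 : (∏ i, (Pi.single k t : Fin N → ℝ) i ^ a i) = 1 := by
        apply Finset.prod_eq_one
        intro i _
        rw [hA i, pow_zero]
      have h2 : (∑ i, c i * (Pi.single k t : Fin N → ℝ) i ^ (2 * m i)) =
          c k * t ^ (2 * m k) := by
        rw [Finset.sum_eq_single k]
        · rw [Pi.single_eq_same]
        · intro i _ hi
          rw [Pi.single_apply, if_neg hi, zero_pow (by have := hm i; omega), mul_zero]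
        · intro h; exact absurd (Finset.mem_univ k) h
      rw [h1, h2, one_div]
    rw [heq] at hL2
    have hden : Tendsto (fun t : ℝ => c k * t ^ (2 * m k))
        (nhdsWithin 0 {t : ℝ | t ≠ 0}) (nhdsWithin 0 (Set.Ioi 0)) := by
      rw [tendsto_nhdsWithin_iff]
      constructor
      · have : Continuous (fun t : ℝ => c k * t ^ (2 * m k)) := by continuity
        have := this.tendsto 0
        simp only [zero_pow (by have := hm k; omega : 2 * m k ≠ 0), mul_zero] at this
        exact this.mono_left nhdsWithin_le_nhds
      · filter_upwards [self_mem_nhdsWithin] with t ht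
        have : (0:ℝ) < t ^ (2 * m k) := (even_two_mul (m k)).pow_pos ht
        exact mul_pos (hc k) this
    have htop : Tendsto (fun t : ℝ => (c k * t ^ (2 * m k))⁻¹)
        (nhdsWithin 0 {t : ℝ | t ≠ 0}) atTop := hden.inv_tendsto_nhdsGT_zero
    exact absurd htop (not_tendsto_atTop_of_tendsto_nhds hL2)
end

section
/- Let N > 1 be a natural number, let a : Fin N → ℕ be non-negative integers and m : Fin N → ℕ be positive integers. Suppose there exists an index j with a j ≥ 2 * m j, and suppose that either a j > 2 * m j or a i > 0 for some i ≠ j. Then for every nonzero x in ℝ^N, |(∏ i, x i ^ a i) / (∑ i, x i ^ (2 * m i))| ≤ |x j| ^ (a j - 2 * m j) * ∏_{i ≠ j} |x i| ^ a i, and consequently f(x) = (∏ i, x i ^ a i) / (∑ i, x i ^ (2 * m i)) tends to 0 as x tends to 0 along nonzero points. -/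
open Filter

theorem stmt_5 (N : ℕ) (hN : 1 < N) (a : Fin N → ℕ) (m : Fin N → ℕ)
    (hm : ∀ i, 0 < m i) (j : Fin N) (hj : 2 * m j ≤ a j)
    (hj' : 2 * m j < a j ∨ ∃ i, i ≠ j ∧ 0 < a i) :
    (∀ x : Fin N → ℝ, x ≠ 0 →
      |(∏ i, x i ^ a i) / (∑ i, x i ^ (2 * m i))| ≤
        |x j| ^ (a j - 2 * m j) * ∏ i ∈ Finset.univ.erase j, |x i| ^ a i) ∧
    Tendsto (fun x : Fin N → ℝ =>
        (∏ i, x i ^ a i) / (∑ i, x i ^ (2 * m i)))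
      (nhdsWithin 0 {x : Fin N → ℝ | x ≠ 0}) (nhds 0) := by
  have key : ∀ x : Fin N → ℝ, x ≠ 0 →
      |(∏ i, x i ^ a i) / (∑ i, x i ^ (2 * m i))| ≤
        |x j| ^ (a j - 2 * m j) * ∏ i ∈ Finset.univ.erase j, |x i| ^ a i := by
    intro x hx
    have hQ : (0:ℝ) ≤ ∏ i ∈ Finset.univ.erase j, |x i| ^ a i := by positivity
    by_cases hxj : x j = 0
    · have h0 : x j ^ a j = 0 := by
        rw [hxj]; exact zero_pow (by have := hm j; omega)
      rw [show (∏ i, x i ^ a i) = 0 from Finset.prod_eq_zero (Finset.mem_univ j) h0]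
      simp only [zero_div, abs_zero]
      positivity
    · have hd : 0 < x j ^ (2 * m j) := by
        rw [pow_mul]
        exact pow_pos (pow_two_pos_of_ne_zero hxj) (m j)
      have hterm : ∀ i ∈ Finset.univ, (0:ℝ) ≤ x i ^ (2 * m i) := by
        intro i _; rw [pow_mul]; positivity
      have hS : x j ^ (2 * m j) ≤ ∑ i, x i ^ (2 * m i) :=
        Finset.single_le_sum hterm (Finset.mem_univ j)
      have hSpos : 0 < ∑ i, x i ^ (2 * m i) := lt_of_lt_of_le hd hS
      have habs : |∏ i, x i ^ a i| = |x j| ^ a j * ∏ i ∈ Finset.univ.erase j, |x i| ^ a i := by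
        rw [Finset.abs_prod]
        simp only [abs_pow]
        exact (Finset.mul_prod_erase Finset.univ (fun i => |x i| ^ a i)
          (Finset.mem_univ j)).symm
      have hrhs : |x j| ^ (a j - 2 * m j) * ∏ i ∈ Finset.univ.erase j, |x i| ^ a i
          = (|x j| ^ a j * ∏ i ∈ Finset.univ.erase j, |x i| ^ a i) / x j ^ (2 * m j) := by
        rw [eq_div_iff hd.ne']
        have h1 : x j ^ (2 * m j) = |x j| ^ (2 * m j) := ((even_two_mul (m j)).pow_abs (x j)).symm
        rw [h1, mul_right_comm, ← pow_add, Nat.sub_add_cancel hj]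
      rw [abs_div, abs_of_pos hSpos, habs, hrhs]
      gcongr
  refine ⟨key, ?_⟩
  have hg : Tendsto (fun x : Fin N → ℝ =>
      |x j| ^ (a j - 2 * m j) * ∏ i ∈ Finset.univ.erase j, |x i| ^ a i)
      (nhdsWithin 0 {x : Fin N → ℝ | x ≠ 0}) (nhds 0) := by
    have hc : Continuous (fun x : Fin N → ℝ =>
        |x j| ^ (a j - 2 * m j) * ∏ i ∈ Finset.univ.erase j, |x i| ^ a i) := by
      exact ((continuous_apply j).abs.pow _).mul
        (continuous_finset_prod _ fun i _ => (continuous_apply i).abs.pow _)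
    have h0 : |(0 : Fin N → ℝ) j| ^ (a j - 2 * m j) *
        ∏ i ∈ Finset.univ.erase j, |(0 : Fin N → ℝ) i| ^ a i = 0 := by
      rcases hj' with h | ⟨i, hij, hi⟩
      · simp only [Pi.zero_apply, abs_zero]
        rw [zero_pow (by omega), zero_mul]
      · have : ∏ i ∈ Finset.univ.erase j, |(0 : Fin N → ℝ) i| ^ a i = 0 := by
          apply Finset.prod_eq_zero (Finset.mem_erase.mpr ⟨hij, Finset.mem_univ i⟩)
          simp only [Pi.zero_apply, abs_zero]
          exact zero_pow (by omega)
        simp only [this, mul_zero]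
    have := hc.tendsto 0
    rw [h0] at this
    exact this.mono_left nhdsWithin_le_nhds
  apply squeeze_zero_norm' _ hg
  filter_upwards [self_mem_nhdsWithin] with x hx
  rw [Real.norm_eq_abs]; exact key x hx
end

section
/- Let N > 1 be a natural number, let a : Fin N → ℝ be non-negative real numbers and m : Fin N → ℕ be positive integers with ∑ i, a i / (2 * m i) > 1. Then the function g(x) = (∏ i, |x i| ^ (a i)) / (∑ i, x i ^ (2 * m i)), where |x i| ^ (a i) is the real power of the absolute value, tends to 0 as x tends to 0 along nonzero points of ℝ^N. -/
open Filter

theorem stmt_8 (N : ℕ) (hN : 1 < N) (a : Fin N → ℝ) (ha : ∀ i, 0 ≤ a i)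
    (m : Fin N → ℕ) (hm : ∀ i, 0 < m i)
    (hsum : ∑ i, a i / (2 * m i) > 1) :
    Tendsto (fun x : Fin N → ℝ =>
        (∏ i, |x i| ^ (a i)) / (∑ i, x i ^ (2 * m i)))
      (nhdsWithin 0 {x : Fin N → ℝ | x ≠ 0}) (nhds 0) := by
  set s : ℝ := ∑ i, a i / (2 * m i) with hs
  set S : (Fin N → ℝ) → ℝ := fun x : Fin N → ℝ => ∑ i, x i ^ (2 * m i) with hSdef
  have hSnonneg : ∀ (x : Fin N → ℝ) (i : Fin N), 0 ≤ x i ^ (2 * m i) := fun x i =>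
    (even_two_mul (m i)).pow_nonneg _
  have hSpos : ∀ x : Fin N → ℝ, x ≠ 0 → 0 < S x := by
    intro x hx
    obtain ⟨i, hi⟩ := Function.ne_iff.1 hx
    refine Finset.sum_pos' (fun j _ => hSnonneg x j) ⟨i, Finset.mem_univ i, ?_⟩
    exact lt_of_le_of_ne (hSnonneg x i) (Ne.symm (pow_ne_zero _ hi))
  have key : ∀ x : Fin N → ℝ, x ≠ 0 →
      (∏ i, |x i| ^ (a i)) / S x ≤ (S x) ^ (s - 1) := by
    intro x hx
    have hS := hSpos x hx
    have hterm : ∀ i, |x i| ^ (a i) ≤ (S x) ^ (a i / (2 * m i)) := by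
      intro i
      have h2m : (0:ℝ) < (2 * m i : ℕ) := by
        have := hm i; positivity
      have h1 : |x i| ^ (a i) = (x i ^ (2 * m i)) ^ (a i / (2 * m i)) := by
        rw [← (even_two_mul (m i)).pow_abs, ← Real.rpow_natCast |x i| (2 * m i),
          ← Real.rpow_mul (abs_nonneg _)]
        congr 1
        have h0 : (0:ℝ) < m i := Nat.cast_pos.2 (hm i)
        have hne : (2 * (m i : ℝ)) ≠ 0 := by positivity
        push_cast
        field_simp
      rw [h1]
      exact Real.rpow_le_rpow (hSnonneg x i)
        (Finset.single_le_sum (fun j _ => hSnonneg x j) (Finset.mem_univ i))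
        (div_nonneg (ha i) (by positivity))
    have hprod : (∏ i, |x i| ^ (a i)) ≤ (S x) ^ s := by
      rw [hs, Real.rpow_sum_of_pos hS]
      exact Finset.prod_le_prod (fun i _ => Real.rpow_nonneg (abs_nonneg _) _)
        (fun i _ => hterm i)
    calc (∏ i, |x i| ^ (a i)) / S x ≤ (S x) ^ s / S x := by gcongr
      _ = (S x) ^ (s - 1) := by
          rw [Real.rpow_sub hS, Real.rpow_one]
  have hScont : Tendsto S (nhdsWithin 0 {x : Fin N → ℝ | x ≠ 0}) (nhds 0) := by
    have hc : Continuous S := by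
      apply continuous_finset_sum
      intro i _
      exact (continuous_apply i).pow _
    have h0 : S 0 = 0 := by
      simp only [hSdef, Pi.zero_apply]
      apply Finset.sum_eq_zero
      intro i _
      exact zero_pow (by have := hm i; omega)
    have := hc.continuousAt (x := (0 : Fin N → ℝ))
    rw [ContinuousAt, h0] at this
    exact this.mono_left nhdsWithin_le_nhds
  have hrpow : Tendsto (fun t : ℝ => t ^ (s - 1)) (nhds 0) (nhds 0) := by
    have : ContinuousAt (fun t : ℝ => t ^ (s - 1)) 0 :=
      Real.continuousAt_rpow_const 0 (s - 1) (Or.inr (by linarith))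
    have h0 : (0:ℝ) ^ (s - 1) = 0 := Real.zero_rpow (by linarith)
    simpa [ContinuousAt, h0] using this
  refine squeeze_zero' ?_ ?_ (hrpow.comp hScont)
  · filter_upwards with x
    exact div_nonneg (Finset.prod_nonneg fun i _ => Real.rpow_nonneg (abs_nonneg _) _)
      (Finset.sum_nonneg fun i _ => hSnonneg x i)
  · filter_upwards [self_mem_nhdsWithin] with x hx
    exact key x hx
end

section
/- Let N > 1 be a natural number, let a : Fin N → ℕ and m : Fin N → ℕ be positive integers, and c : Fin N → ℝ be positive real numbers, and suppose ∑ i, (a i : ℝ) / (2 * m i) > 1 + max over j of (a j : ℝ) / (2 * m j). Define F : (Fin N → ℝ) → ℝ by F(x) = (∏ i, x i ^ a i) / (∑ i, c i * x i ^ (2 * m i)) for x ≠ 0 and F(0) = 0. Then F is differentiable at 0 with derivative 0, and every partial derivative function x ↦ ∂F/∂x_j (defined as the j-th partial derivative of F at x for x ≠ 0, and 0 at x = 0) is continuous at 0. -/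
open Finset

lemma aux_D_pos {N : ℕ} {m : Fin N → ℕ} {c : Fin N → ℝ}
    (hm : ∀ i, 0 < m i) (hc : ∀ i, 0 < c i) {x : Fin N → ℝ} (hx : x ≠ 0) :
    0 < ∑ i, c i * x i ^ (2 * m i) := by
  obtain ⟨i, hi⟩ : ∃ i, x i ≠ 0 := by
    by_contra h; push_neg at h; exact hx (funext h)
  refine Finset.sum_pos' (fun k _ => by
    have : (0:ℝ) ≤ x k ^ (2 * m k) := by rw [pow_mul]; positivity
    exact mul_nonneg (hc k).le this) ⟨i, Finset.mem_univ i, ?_⟩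
  have : (0:ℝ) < x i ^ (2 * m i) := by rw [pow_mul]; positivity
  exact mul_pos (hc i) this

lemma aux_prod_le {N : ℕ} {m : Fin N → ℕ} {c : Fin N → ℝ}
    (hm : ∀ i, 0 < m i) (hc : ∀ i, 0 < c i) (x : Fin N → ℝ)
    (hD : 0 < ∑ i, c i * x i ^ (2 * m i)) (e : Fin N → ℕ) :
    ∏ i, |x i| ^ e i ≤ (∏ i, ((c i)⁻¹) ^ ((e i : ℝ) / (2 * m i))) *
      (∑ i, c i * x i ^ (2 * m i)) ^ (∑ i, (e i : ℝ) / (2 * m i)) := by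
  set D := ∑ i, c i * x i ^ (2 * m i) with hDdef
  have step : ∀ i, (|x i| : ℝ) ^ (e i : ℕ) ≤ (D / c i) ^ ((e i : ℝ) / (2 * m i)) := by
    intro i
    have hmi : ((m i : ℝ)) ≠ 0 := Nat.cast_ne_zero.mpr (hm i).ne'
    have h1 : x i ^ (2 * m i) ≤ D / c i := by
      rw [le_div_iff₀ (hc i), mul_comm]
      exact Finset.single_le_sum (f := fun k => c k * x k ^ (2 * m k))
        (fun k _ => mul_nonneg (hc k).le (by rw [pow_mul]; positivity)) (Finset.mem_univ i)
    calc |x i| ^ (e i : ℕ) = (|x i| ^ (((2 * m i : ℕ)) : ℝ)) ^ ((e i : ℝ) / (2 * m i)) := by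
          rw [← Real.rpow_natCast |x i| (e i), ← Real.rpow_mul (abs_nonneg _)]
          congr 1
          push_cast
          field_simp
      _ ≤ (D / c i) ^ ((e i : ℝ) / (2 * m i)) := by
          apply Real.rpow_le_rpow (by positivity) _ (by positivity)
          rw [Real.rpow_natCast, (even_two_mul (m i)).pow_abs]
          exact h1
  calc ∏ i, |x i| ^ e i ≤ ∏ i, (D / c i) ^ ((e i : ℝ) / (2 * m i)) :=
        Finset.prod_le_prod (fun i _ => pow_nonneg (abs_nonneg _) _) (fun i _ => step i)
    _ = ∏ i, ((c i)⁻¹ ^ ((e i : ℝ) / (2 * m i)) * D ^ ((e i : ℝ) / (2 * m i))) := by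
        refine Finset.prod_congr rfl fun i _ => ?_
        rw [div_eq_mul_inv, Real.mul_rpow hD.le (inv_nonneg.mpr (hc i).le), mul_comm]
    _ = (∏ i, ((c i)⁻¹) ^ ((e i : ℝ) / (2 * m i))) * ∏ i, D ^ ((e i : ℝ) / (2 * m i)) :=
        Finset.prod_mul_distrib
    _ = _ := by rw [← Real.rpow_sum_of_pos hD]

lemma aux_sum_exp {N : ℕ} {a m : Fin N → ℕ} (j : Fin N) (v : ℕ) :
    ∑ i, ((Function.update a j v i : ℝ) / (2 * m i)) =
      (∑ i, (a i : ℝ) / (2 * m i)) - (a j : ℝ) / (2 * m j) + (v : ℝ) / (2 * m j) := by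
  have h1 : ∀ i : Fin N, ((Function.update a j v i : ℝ) / (2 * m i)) =
      Function.update (fun k => (a k : ℝ) / (2 * m k)) j ((v : ℝ) / (2 * m j)) i := by
    intro i
    rcases eq_or_ne i j with rfl | hij
    · simp
    · simp [Function.update_of_ne hij]
  rw [Finset.sum_congr rfl fun i _ => h1 i, Finset.sum_update_of_mem (Finset.mem_univ j),
    ← Finset.add_sum_erase _ (fun i => (a i : ℝ) / (2 * m i)) (Finset.mem_univ j),
    Finset.sdiff_singleton_eq_erase]
  ring

lemma aux_tendsto {N : ℕ} {m : Fin N → ℕ} {c : Fin N → ℝ}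
    (hm : ∀ i, 0 < m i) (K ε : ℝ) (hε : 0 < ε) :
    Filter.Tendsto (fun x : Fin N → ℝ => K * (∑ i, c i * x i ^ (2 * m i)) ^ ε)
      (nhds 0) (nhds 0) := by
  have hD0 : (∑ i, c i * (0 : Fin N → ℝ) i ^ (2 * m i)) = 0 :=
    Finset.sum_eq_zero fun i _ => by
      rw [Pi.zero_apply, zero_pow (Nat.mul_ne_zero two_ne_zero (hm i).ne'), mul_zero]
  have hDc : Continuous fun x : Fin N → ℝ => ∑ i, c i * x i ^ (2 * m i) :=
    continuous_finset_sum _ fun i _ => continuous_const.mul ((continuous_apply i).pow _)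
  have hcont : ContinuousAt (fun x : Fin N → ℝ =>
      K * (∑ i, c i * x i ^ (2 * m i)) ^ ε) 0 := by
    apply ContinuousAt.mul continuousAt_const
    exact ContinuousAt.rpow_const hDc.continuousAt (Or.inr hε.le)
  have := hcont.tendsto
  rwa [hD0, Real.zero_rpow hε.ne', mul_zero] at this

open Classical in
lemma aux_deriv {N : ℕ} {a m : Fin N → ℕ} {c : Fin N → ℝ}
    (hm : ∀ i, 0 < m i) (hc : ∀ i, 0 < c i)
    (F : (Fin N → ℝ) → ℝ)
    (hF : F = fun x => if x = 0 then 0 else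
      (∏ i, x i ^ a i) / (∑ i, c i * x i ^ (2 * m i)))
    {x : Fin N → ℝ} (hx : x ≠ 0) (j : Fin N) :
    deriv (fun t : ℝ => F (Function.update x j t)) (x j) =
      (((a j : ℝ) * x j ^ (a j - 1) * ∏ i ∈ Finset.univ.erase j, x i ^ a i) *
          (∑ i, c i * x i ^ (2 * m i)) -
        (x j ^ a j * ∏ i ∈ Finset.univ.erase j, x i ^ a i) *
          (c j * ((2 * m j : ℕ) * x j ^ (2 * m j - 1)))) /
        (∑ i, c i * x i ^ (2 * m i)) ^ 2 := by
  set P := ∏ i ∈ Finset.univ.erase j, x i ^ a i with hP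
  set Q := ∑ i ∈ Finset.univ.erase j, c i * x i ^ (2 * m i) with hQ
  have hDQ : (∑ i, c i * x i ^ (2 * m i)) = c j * x j ^ (2 * m j) + Q :=
    (Finset.add_sum_erase _ (fun i => c i * x i ^ (2 * m i)) (Finset.mem_univ j)).symm
  have hD : 0 < ∑ i, c i * x i ^ (2 * m i) := aux_D_pos hm hc hx
  have key : ∀ t : ℝ, Function.update x j t ≠ 0 →
      F (Function.update x j t) = (t ^ a j * P) / (c j * t ^ (2 * m j) + Q) := by
    intro t ht
    rw [hF]
    simp only [if_neg ht]
    congr 1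
    · rw [← Finset.mul_prod_erase Finset.univ (fun i => Function.update x j t i ^ a i)
        (Finset.mem_univ j), Function.update_self]
      congr 1
      exact Finset.prod_congr rfl fun i hi =>
        by rw [Function.update_of_ne (Finset.ne_of_mem_erase hi)]
    · rw [← Finset.add_sum_erase Finset.univ (fun i => c i * Function.update x j t i ^ (2 * m i))
        (Finset.mem_univ j), Function.update_self]
      congr 1
      exact Finset.sum_congr rfl fun i hi =>
        by rw [Function.update_of_ne (Finset.ne_of_mem_erase hi)]
  have hev : (fun t : ℝ => F (Function.update x j t)) =ᶠ[nhds (x j)]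
      (fun t : ℝ => (t ^ a j * P) / (c j * t ^ (2 * m j) + Q)) := by
    by_cases hxx : ∃ i, i ≠ j ∧ x i ≠ 0
    · obtain ⟨i, hij, hxi⟩ := hxx
      refine Filter.Eventually.of_forall fun t => key t fun h0 => hxi ?_
      have := congrFun h0 i
      rwa [Function.update_of_ne hij] at this
    · push_neg at hxx
      have hxj : x j ≠ 0 := by
        intro h
        apply hx
        funext i
        rcases eq_or_ne i j with rfl | hij
        · exact h
        · exact hxx i hij
      filter_upwards [eventually_ne_nhds hxj] with t ht
      refine key t fun h0 => ht ?_
      have := congrFun h0 j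
      rwa [Function.update_self] at this
  rw [hev.deriv_eq]
  have hden : c j * x j ^ (2 * m j) + Q ≠ 0 := by rw [← hDQ]; exact hD.ne'
  have h1 : HasDerivAt (fun t : ℝ => t ^ a j * P)
      ((a j : ℝ) * x j ^ (a j - 1) * P) (x j) := (hasDerivAt_pow (a j) (x j)).mul_const P
  have h2 : HasDerivAt (fun t : ℝ => c j * t ^ (2 * m j) + Q)
      (c j * ((2 * m j : ℕ) * x j ^ (2 * m j - 1))) (x j) :=
    ((hasDerivAt_pow (2 * m j) (x j)).const_mul (c j)).add_const Q
  rw [(show HasDerivAt (fun t : ℝ => t ^ a j * P / (c j * t ^ (2 * m j) + Q)) _ (x j) from h1.div h2 hden).deriv, ← hDQ]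

lemma aux_bound {N : ℕ} (a : Fin N → ℕ) {m : Fin N → ℕ} {c : Fin N → ℝ}
    (ha : ∀ i, 0 < a i) (hm : ∀ i, 0 < m i) (hc : ∀ i, 0 < c i)
    {x : Fin N → ℝ} (hx : x ≠ 0) (j : Fin N) :
    |(((a j : ℝ) * x j ^ (a j - 1) * ∏ i ∈ Finset.univ.erase j, x i ^ a i) *
          (∑ i, c i * x i ^ (2 * m i)) -
        (x j ^ a j * ∏ i ∈ Finset.univ.erase j, x i ^ a i) *
          (c j * ((2 * m j : ℕ) * x j ^ (2 * m j - 1)))) /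
        (∑ i, c i * x i ^ (2 * m i)) ^ 2|
      ≤ ((a j : ℝ) * ∏ i, ((c i)⁻¹) ^ ((Function.update a j (a j - 1) i : ℝ) / (2 * m i)) +
          c j * (2 * m j : ℕ) *
            ∏ i, ((c i)⁻¹) ^ ((Function.update a j (a j + (2 * m j - 1)) i : ℝ) / (2 * m i))) *
        (∑ i, c i * x i ^ (2 * m i)) ^
          ((∑ i, (a i : ℝ) / (2 * m i)) - 1 / (2 * (m j : ℝ)) - 1) := by
  have hD : 0 < ∑ i, c i * x i ^ (2 * m i) := aux_D_pos hm hc hx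
  set D := ∑ i, c i * x i ^ (2 * m i) with hDdef
  set e1 := Function.update a j (a j - 1) with he1
  set e2 := Function.update a j (a j + (2 * m j - 1)) with he2
  set C1 := ∏ i, ((c i)⁻¹) ^ ((e1 i : ℝ) / (2 * m i)) with hC1
  set C2 := ∏ i, ((c i)⁻¹) ^ ((e2 i : ℝ) / (2 * m i)) with hC2
  set S := ∑ i, (a i : ℝ) / (2 * m i) with hS
  have hmj : (0:ℝ) < (m j : ℝ) := Nat.cast_pos.mpr (hm j)
  have hE1 : (∑ i, (e1 i : ℝ) / (2 * m i)) = S - 1 / (2 * (m j : ℝ)) := by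
    rw [he1, aux_sum_exp j (a j - 1), Nat.cast_sub (ha j), Nat.cast_one]
    field_simp
    rw [hS]; ring
  have hE2 : (∑ i, (e2 i : ℝ) / (2 * m i)) = S - 1 / (2 * (m j : ℝ)) + 1 := by
    rw [he2, aux_sum_exp j _, Nat.cast_add, Nat.cast_sub (by have := hm j; omega : 1 ≤ 2 * m j)]
    push_cast
    field_simp
    ring
  -- product identities
  have habs1 : ∏ i, |x i| ^ e1 i = |x j| ^ (a j - 1) * ∏ i ∈ Finset.univ.erase j, |x i| ^ a i := by
    rw [← Finset.mul_prod_erase Finset.univ (fun i => |x i| ^ e1 i) (Finset.mem_univ j),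
      he1, Function.update_self]
    congr 1
    exact Finset.prod_congr rfl fun i hi => by
      rw [Function.update_of_ne (Finset.ne_of_mem_erase hi)]
  have habs2 : ∏ i, |x i| ^ e2 i =
      (|x j| ^ a j * |x j| ^ (2 * m j - 1)) * ∏ i ∈ Finset.univ.erase j, |x i| ^ a i := by
    rw [← Finset.mul_prod_erase Finset.univ (fun i => |x i| ^ e2 i) (Finset.mem_univ j),
      he2, Function.update_self, pow_add]
    congr 1
    exact Finset.prod_congr rfl fun i hi => by
      rw [Function.update_of_ne (Finset.ne_of_mem_erase hi)]
  have habsP : |∏ i ∈ Finset.univ.erase j, x i ^ a i| = ∏ i ∈ Finset.univ.erase j, |x i| ^ a i := by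
    rw [Finset.abs_prod]
    exact Finset.prod_congr rfl fun i _ => abs_pow _ _
  have hC1nn : 0 ≤ C1 := Finset.prod_nonneg fun i _ =>
    Real.rpow_nonneg (inv_nonneg.mpr (hc i).le) _
  have hC2nn : 0 ≤ C2 := Finset.prod_nonneg fun i _ =>
    Real.rpow_nonneg (inv_nonneg.mpr (hc i).le) _
  -- term bounds
  have hT1 : |((a j : ℝ) * x j ^ (a j - 1) * ∏ i ∈ Finset.univ.erase j, x i ^ a i) * D|
      ≤ (a j : ℝ) * C1 * D ^ ((S - 1 / (2 * (m j : ℝ))) + 1) := by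
    rw [abs_mul, abs_mul, abs_mul, abs_of_pos hD, Nat.abs_cast, abs_pow,
      Real.rpow_add_one hD.ne', ← mul_assoc]
    apply mul_le_mul_of_nonneg_right _ hD.le
    have := aux_prod_le hm hc x hD e1
    rw [habs1, hE1] at this
    calc (a j : ℝ) * |x j| ^ (a j - 1) * |∏ i ∈ Finset.univ.erase j, x i ^ a i|
        = (a j : ℝ) * (|x j| ^ (a j - 1) * ∏ i ∈ Finset.univ.erase j, |x i| ^ a i) := by
          rw [habsP]; ring
      _ ≤ (a j : ℝ) * (C1 * D ^ (S - 1 / (2 * (m j : ℝ)))) := by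
          apply mul_le_mul_of_nonneg_left this (Nat.cast_nonneg _)
      _ = (a j : ℝ) * C1 * D ^ (S - 1 / (2 * (m j : ℝ))) := by ring
  have hT2 : |(x j ^ a j * ∏ i ∈ Finset.univ.erase j, x i ^ a i) *
        (c j * ((2 * m j : ℕ) * x j ^ (2 * m j - 1)))|
      ≤ c j * (2 * m j : ℕ) * C2 * D ^ ((S - 1 / (2 * (m j : ℝ))) + 1) := by
    have := aux_prod_le hm hc x hD e2
    rw [habs2, hE2] at this
    calc |(x j ^ a j * ∏ i ∈ Finset.univ.erase j, x i ^ a i) *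
          (c j * ((2 * m j : ℕ) * x j ^ (2 * m j - 1)))|
        = c j * (2 * m j : ℕ) *
            ((|x j| ^ a j * |x j| ^ (2 * m j - 1)) * ∏ i ∈ Finset.univ.erase j, |x i| ^ a i) := by
          rw [abs_mul, abs_mul, abs_mul, abs_mul, habsP, abs_pow, abs_pow,
            Nat.abs_cast, abs_of_pos (hc j)]
          ring
      _ ≤ c j * (2 * m j : ℕ) * (C2 * D ^ ((S - 1 / (2 * (m j : ℝ))) + 1)) := by
          exact mul_le_mul_of_nonneg_left this (mul_nonneg (hc j).le (Nat.cast_nonneg _))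
      _ = _ := by ring
  -- combine
  rw [abs_div, abs_of_pos (pow_pos hD 2)]
  rw [div_le_iff₀ (pow_pos hD 2)]
  calc |(((a j : ℝ) * x j ^ (a j - 1) * ∏ i ∈ Finset.univ.erase j, x i ^ a i) * D -
        (x j ^ a j * ∏ i ∈ Finset.univ.erase j, x i ^ a i) *
          (c j * ((2 * m j : ℕ) * x j ^ (2 * m j - 1))))|
      ≤ ((a j : ℝ) * C1 + c j * (2 * m j : ℕ) * C2) * D ^ ((S - 1 / (2 * (m j : ℝ))) + 1) := by
        refine (abs_sub _ _).trans ?_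
        rw [add_mul]
        exact add_le_add hT1 hT2
    _ = ((a j : ℝ) * C1 + c j * (2 * m j : ℕ) * C2) *
          D ^ (S - 1 / (2 * (m j : ℝ)) - 1) * D ^ 2 := by
        have h9 : D ^ (S - 1 / (2 * (m j : ℝ)) - 1) * D ^ (((2:ℕ)):ℝ) =
            D ^ (S - 1 / (2 * (m j : ℝ)) + 1) := by
          rw [← Real.rpow_add hD]; congr 1; push_cast; ring
        rw [Real.rpow_natCast] at h9
        rw [mul_assoc _ (D ^ (S - 1 / (2 * (m j : ℝ)) - 1)) (D ^ 2), h9]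

open Classical in
theorem stmt_9 (N : ℕ) (hN : 1 < N) (a : Fin N → ℕ) (ha : ∀ i, 0 < a i)
    (m : Fin N → ℕ) (hm : ∀ i, 0 < m i) (c : Fin N → ℝ) (hc : ∀ i, 0 < c i)
    (hsum : ∀ j, ∑ i, (a i : ℝ) / (2 * m i) > 1 + (a j : ℝ) / (2 * m j))
    (F : (Fin N → ℝ) → ℝ)
    (hF : F = fun x => if x = 0 then 0 else
      (∏ i, x i ^ a i) / (∑ i, c i * x i ^ (2 * m i))) :
    HasFDerivAt F (0 : (Fin N → ℝ) →L[ℝ] ℝ) 0 ∧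
    ∀ j : Fin N, ContinuousAt (fun x : Fin N → ℝ =>
      if x = 0 then 0 else deriv (fun t : ℝ => F (Function.update x j t)) (x j)) 0 := by
  haveI : Nonempty (Fin N) := ⟨⟨0, by omega⟩⟩
  have hF0 : F 0 = 0 := by rw [hF]; simp
  have hεpos : ∀ j : Fin N, 0 < (∑ i, (a i : ℝ) / (2 * m i)) - 1 / (2 * (m j : ℝ)) - 1 := by
    intro j
    have h := hsum j
    have hmj : (0:ℝ) < 2 * (m j : ℝ) := by
      have := hm j; positivity
    have h1 : (1:ℝ) / (2 * (m j : ℝ)) ≤ (a j : ℝ) / (2 * (m j : ℝ)) := by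
      have : (1:ℝ) ≤ (a j : ℝ) := Nat.one_le_cast.mpr (ha j)
      gcongr
    linarith
  have hC1nn : ∀ j : Fin N,
      0 ≤ ∏ i, ((c i)⁻¹) ^ ((Function.update a j (a j - 1) i : ℝ) / (2 * m i)) :=
    fun j => Finset.prod_nonneg fun i _ => Real.rpow_nonneg (inv_nonneg.mpr (hc i).le) _
  constructor
  · -- derivative at 0
    rw [hasFDerivAt_iff_tendsto]
    simp only [sub_zero, hF0, ContinuousLinearMap.zero_apply, sub_zero]
    apply squeeze_zero_norm (a := fun y : Fin N → ℝ =>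
      ∑ j, (∏ i, ((c i)⁻¹) ^ ((Function.update a j (a j - 1) i : ℝ) / (2 * m i))) *
        (∑ i, c i * y i ^ (2 * m i)) ^
          ((∑ i, (a i : ℝ) / (2 * m i)) - 1 / (2 * (m j : ℝ)) - 1))
    · intro y
      rw [Real.norm_eq_abs, abs_of_nonneg (mul_nonneg (inv_nonneg.mpr (norm_nonneg _))
        (norm_nonneg _))]
      by_cases hy : y = 0
      · subst hy
        rw [norm_zero, inv_zero, zero_mul]
        exact Finset.sum_nonneg fun j _ => mul_nonneg (hC1nn j) (Real.rpow_nonneg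
          (Finset.sum_nonneg fun i _ => mul_nonneg (hc i).le (by rw [pow_mul]; positivity)) _)
      · have hD : 0 < ∑ i, c i * y i ^ (2 * m i) := aux_D_pos hm hc hy
        obtain ⟨j₀, -, hj₀⟩ := Finset.exists_mem_eq_sup (Finset.univ : Finset (Fin N))
          Finset.univ_nonempty (fun i => ‖y i‖₊)
        have hny : ‖y‖ = |y j₀| := by
          rw [Pi.norm_def, hj₀, coe_nnnorm, Real.norm_eq_abs]
        have hnyne : ‖y‖ ≠ 0 := norm_ne_zero_iff.mpr hy
        set e1 := Function.update a j₀ (a j₀ - 1) with he1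
        set C1 := ∏ i, ((c i)⁻¹) ^ ((e1 i : ℝ) / (2 * m i)) with hC1
        set S := ∑ i, (a i : ℝ) / (2 * m i) with hS
        set D := ∑ i, c i * y i ^ (2 * m i) with hD2
        have hE1 : (∑ i, (e1 i : ℝ) / (2 * m i)) = S - 1 / (2 * (m j₀ : ℝ)) := by
          have hmj0 : ((m j₀ : ℝ)) ≠ 0 := Nat.cast_ne_zero.mpr (hm j₀).ne'
          rw [he1, aux_sum_exp j₀ (a j₀ - 1), Nat.cast_sub (ha j₀), Nat.cast_one]
          field_simp
          rw [hS]; ring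
        have hFy : ‖F y‖ = (∏ i, |y i| ^ a i) / D := by
          rw [hF]
          simp only [if_neg hy]
          rw [Real.norm_eq_abs, abs_div, abs_of_pos hD, Finset.abs_prod]
          congr 1
          exact Finset.prod_congr rfl fun i _ => abs_pow _ _
        have hsplit : ∏ i, |y i| ^ a i = |y j₀| * ∏ i, |y i| ^ e1 i := by
          rw [← Finset.mul_prod_erase Finset.univ (fun i => |y i| ^ e1 i) (Finset.mem_univ j₀),
            ← Finset.mul_prod_erase Finset.univ (fun i => |y i| ^ a i) (Finset.mem_univ j₀),
            he1, Function.update_self, ← mul_assoc, ← pow_succ', Nat.sub_add_cancel (ha j₀)]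
          congr 1
          exact Finset.prod_congr rfl fun i hi => by
            rw [Function.update_of_ne (Finset.ne_of_mem_erase hi)]
        have step1 : ∏ i, |y i| ^ a i ≤ ‖y‖ * (C1 * D ^ (S - 1 / (2 * (m j₀ : ℝ)))) := by
          rw [hsplit, hny]
          apply mul_le_mul_of_nonneg_left _ (abs_nonneg _)
          have := aux_prod_le hm hc y hD e1
          rwa [hE1] at this
        calc ‖y‖⁻¹ * ‖F y‖ ≤ ‖y‖⁻¹ * ((‖y‖ * (C1 * D ^ (S - 1 / (2 * (m j₀ : ℝ))))) / D) := by
              rw [hFy]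
              gcongr
            _ = C1 * D ^ (S - 1 / (2 * (m j₀ : ℝ))) / D := by
              rw [mul_div_assoc, ← mul_assoc, inv_mul_cancel₀ hnyne, one_mul]
            _ = C1 * D ^ (S - 1 / (2 * (m j₀ : ℝ)) - 1) := by
              rw [Real.rpow_sub_one hD.ne', mul_div_assoc]
            _ ≤ _ := by
              apply Finset.single_le_sum (f := fun j => (∏ i, ((c i)⁻¹) ^
                  ((Function.update a j (a j - 1) i : ℝ) / (2 * m i))) *
                  D ^ (S - 1 / (2 * (m j : ℝ)) - 1))
                (fun j _ => mul_nonneg (hC1nn j) (Real.rpow_nonneg hD.le _))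
                (Finset.mem_univ j₀)
    · have := fun j : Fin N => aux_tendsto (c := c) hm
        (∏ i, ((c i)⁻¹) ^ ((Function.update a j (a j - 1) i : ℝ) / (2 * m i)))
        ((∑ i, (a i : ℝ) / (2 * m i)) - 1 / (2 * (m j : ℝ)) - 1) (hεpos j)
      simpa using Filter.Tendsto.congr (fun y => rfl)
        (tendsto_finset_sum Finset.univ fun j _ => this j)
  · -- partial derivatives continuous at 0
    intro j
    set K := ((a j : ℝ) * ∏ i, ((c i)⁻¹) ^ ((Function.update a j (a j - 1) i : ℝ) / (2 * m i)) +
        c j * (2 * m j : ℕ) *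
          ∏ i, ((c i)⁻¹) ^ ((Function.update a j (a j + (2 * m j - 1)) i : ℝ) / (2 * m i)))
      with hK
    have hKnn : 0 ≤ K := by
      apply add_nonneg (mul_nonneg (Nat.cast_nonneg _) (hC1nn j))
      exact mul_nonneg (mul_nonneg (hc j).le (Nat.cast_nonneg _))
        (Finset.prod_nonneg fun i _ => Real.rpow_nonneg (inv_nonneg.mpr (hc i).le) _)
    have key : Filter.Tendsto (fun x : Fin N → ℝ =>
        if x = 0 then 0 else deriv (fun t : ℝ => F (Function.update x j t)) (x j))
        (nhds 0) (nhds 0) := by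
      apply squeeze_zero_norm (a := fun y : Fin N → ℝ => K * (∑ i, c i * y i ^ (2 * m i)) ^
        ((∑ i, (a i : ℝ) / (2 * m i)) - 1 / (2 * (m j : ℝ)) - 1))
        _ (aux_tendsto hm K _ (hεpos j))
      intro y
      by_cases hy : y = 0
      · subst hy
        rw [if_pos rfl, norm_zero]
        exact mul_nonneg hKnn (Real.rpow_nonneg
          (Finset.sum_nonneg fun i _ => mul_nonneg (hc i).le (by rw [pow_mul]; positivity)) _)
      · rw [if_neg hy, Real.norm_eq_abs, aux_deriv hm hc F hF hy j]
        exact aux_bound a ha hm hc hy j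
    unfold ContinuousAt
    convert key using 2
    exact if_pos rfl
end

section
/- Let N > 1 be a natural number, let a : Fin N → ℕ and m : Fin N → ℕ be positive integers, c : Fin N → ℝ be positive real numbers, and let f(x) = (∏ i, x i ^ a i) / (∑ i, c i * x i ^ (2 * m i)) for x ≠ 0 in ℝ^N. Then for every index j and every nonzero x, the j-th partial derivative of f at x satisfies |∂f/∂x_j (x)| ≤ ((|((a j : ℝ) - 2 * m j)| + a j) * |x j| ^ (a j - 1) * ∏_{i ≠ j} |x i| ^ a i) / (∑ i, c i * x i ^ (2 * m i)), where |x j| ^ (a j - 1) uses the natural number difference a j - 1. -/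
theorem stmt_10 (N : ℕ) (hN : 1 < N) (a : Fin N → ℕ) (ha : ∀ i, 0 < a i)
    (m : Fin N → ℕ) (hm : ∀ i, 0 < m i) (c : Fin N → ℝ) (hc : ∀ i, 0 < c i)
    (f : (Fin N → ℝ) → ℝ)
    (hf : f = fun x => (∏ i, x i ^ a i) / (∑ i, c i * x i ^ (2 * m i)))
    (j : Fin N) (x : Fin N → ℝ) (hx : x ≠ 0) :
    |deriv (fun t : ℝ => f (Function.update x j t)) (x j)| ≤
      ((|(a j : ℝ) - 2 * m j| + a j) * |x j| ^ (a j - 1) *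
          ∏ i ∈ Finset.univ.erase j, |x i| ^ a i) /
        (∑ i, c i * x i ^ (2 * m i)) := by
  subst hf
  set P : ℝ := ∏ i ∈ Finset.univ.erase j, x i ^ a i with hP
  set S : ℝ := ∑ i ∈ Finset.univ.erase j, c i * x i ^ (2 * m i) with hS
  have hfun : (fun t : ℝ => (∏ i, Function.update x j t i ^ a i) /
      (∑ i, c i * Function.update x j t i ^ (2 * m i)))
      = fun t : ℝ => (t ^ a j * P) / (c j * t ^ (2 * m j) + S) := by
    funext t
    congr 1
    · rw [← Finset.mul_prod_erase _ _ (Finset.mem_univ j), Function.update_self]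
      congr 1
      exact Finset.prod_congr rfl fun i hi => by
        rw [Function.update_of_ne (Finset.ne_of_mem_erase hi)]
    · rw [← Finset.add_sum_erase _ _ (Finset.mem_univ j), Function.update_self]
      congr 1
      exact Finset.sum_congr rfl fun i hi => by
        rw [Function.update_of_ne (Finset.ne_of_mem_erase hi)]
  have hDeq : (∑ i, c i * x i ^ (2 * m i)) = c j * x j ^ (2 * m j) + S := by
    rw [← Finset.add_sum_erase _ _ (Finset.mem_univ j)]
  have hD : 0 < ∑ i, c i * x i ^ (2 * m i) := by
    obtain ⟨k, hk⟩ : ∃ k, x k ≠ 0 := by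
      by_contra h; push_neg at h; exact hx (funext h)
    refine Finset.sum_pos' (fun i _ => ?_) ⟨k, Finset.mem_univ k, ?_⟩
    · have : (0:ℝ) ≤ x i ^ (2 * m i) := by
        rw [pow_mul]; positivity
      exact mul_nonneg (hc i).le this
    · have : (0:ℝ) < x k ^ (2 * m k) := by
        rw [pow_mul]; positivity
      exact mul_pos (hc k) this
  have hSnn : 0 ≤ S := by
    refine Finset.sum_nonneg fun i _ => ?_
    have : (0:ℝ) ≤ x i ^ (2 * m i) := by rw [pow_mul]; positivity
    exact mul_nonneg (hc i).le this
  have hqnn : 0 ≤ c j * x j ^ (2 * m j) := by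
    have : (0:ℝ) ≤ x j ^ (2 * m j) := by rw [pow_mul]; positivity
    exact mul_nonneg (hc j).le this
  have hvne : c j * x j ^ (2 * m j) + S ≠ 0 := by rw [← hDeq]; exact ne_of_gt hD
  have hu : HasDerivAt (fun t : ℝ => t ^ a j * P)
      ((a j : ℝ) * x j ^ (a j - 1) * P) (x j) :=
    (hasDerivAt_pow (a j) (x j)).mul_const P
  have hv : HasDerivAt (fun t : ℝ => c j * t ^ (2 * m j) + S)
      (c j * ((2 * m j : ℕ) * x j ^ (2 * m j - 1))) (x j) :=
    ((hasDerivAt_pow (2 * m j) (x j)).const_mul (c j)).add_const S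
  have hdiv := hu.div hv hvne
  rw [hfun, show (fun t : ℝ => t ^ a j * P / (c j * t ^ (2 * m j) + S)) =
      ((fun t : ℝ => t ^ a j * P) / fun t => c j * t ^ (2 * m j) + S) from rfl, hdiv.deriv, ← hDeq]
  set D := ∑ i, c i * x i ^ (2 * m i) with hDdef
  set q := c j * x j ^ (2 * m j) with hq
  have hqle : q ≤ D := by rw [hDeq]; linarith
  -- rewrite the numerator
  have hnum : (a j : ℝ) * x j ^ (a j - 1) * P * D -
      x j ^ a j * P * (c j * ((2 * m j : ℕ) * x j ^ (2 * m j - 1)))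
      = P * x j ^ (a j - 1) * ((a j : ℝ) * D - (2 * m j : ℝ) * q) := by
    rw [hDeq]
    obtain ⟨n, hn⟩ : ∃ n, a j = n + 1 := ⟨a j - 1, (Nat.succ_pred_eq_of_pos (ha j)).symm⟩
    obtain ⟨k, hk⟩ : ∃ k, 2 * m j = k + 1 :=
      ⟨2 * m j - 1, (Nat.succ_pred_eq_of_pos (by have := hm j; omega)).symm⟩
    have hk' : (2:ℝ) * (m j : ℝ) = (k : ℝ) + 1 := by exact_mod_cast hk
    rw [hq, hn, hk]
    simp only [Nat.add_sub_cancel]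
    push_cast
    linear_combination (x j * x j ^ n * x j ^ k * P * c j) * hk'
  rw [hnum, abs_div, abs_of_pos (pow_pos hD 2)]
  have hKey : |(a j : ℝ) * D - (2 * m j : ℝ) * q| ≤ (|(a j : ℝ) - 2 * m j| + a j) * D := by
    have h1 : (a j : ℝ) * D - (2 * m j : ℝ) * q
        = ((a j : ℝ) - 2 * m j) * q + (a j : ℝ) * (D - q) := by ring
    rw [h1]
    calc |((a j : ℝ) - 2 * m j) * q + (a j : ℝ) * (D - q)|
        ≤ |((a j : ℝ) - 2 * m j) * q| + |(a j : ℝ) * (D - q)| := abs_add_le _ _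
      _ = |(a j : ℝ) - 2 * m j| * q + (a j : ℝ) * (D - q) := by
          rw [abs_mul ((a j : ℝ) - 2 * m j) q, abs_mul (a j : ℝ) (D - q), abs_of_nonneg hqnn, abs_of_nonneg (sub_nonneg.2 hqle),
            Nat.abs_cast]
      _ ≤ |(a j : ℝ) - 2 * m j| * D + (a j : ℝ) * D :=
          add_le_add (mul_le_mul_of_nonneg_left hqle (abs_nonneg _))
            (mul_le_mul_of_nonneg_left (by linarith) (by positivity))
      _ = (|(a j : ℝ) - 2 * m j| + a j) * D := by ring
  have hPabs : |P| = ∏ i ∈ Finset.univ.erase j, |x i| ^ a i := by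
    rw [hP, Finset.abs_prod]
    exact Finset.prod_congr rfl fun i _ => abs_pow _ _
  have hnum_le : |P * x j ^ (a j - 1) * ((a j : ℝ) * D - (2 * m j : ℝ) * q)|
      ≤ ((|(a j : ℝ) - 2 * m j| + a j) * |x j| ^ (a j - 1) *
          ∏ i ∈ Finset.univ.erase j, |x i| ^ a i) * D := by
    rw [abs_mul, abs_mul, abs_pow, hPabs]
    calc (∏ i ∈ Finset.univ.erase j, |x i| ^ a i) * |x j| ^ (a j - 1) *
          |(a j : ℝ) * D - (2 * m j : ℝ) * q|
        ≤ (∏ i ∈ Finset.univ.erase j, |x i| ^ a i) * |x j| ^ (a j - 1) *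
          ((|(a j : ℝ) - 2 * m j| + a j) * D) :=
          mul_le_mul_of_nonneg_left hKey
            (mul_nonneg (Finset.prod_nonneg fun i _ => by positivity) (by positivity))
      _ = _ := by ring
  rw [div_le_div_iff₀ (pow_pos hD 2) hD]
  calc |P * x j ^ (a j - 1) * ((a j : ℝ) * D - (2 * m j : ℝ) * q)| * D
      ≤ (((|(a j : ℝ) - 2 * m j| + a j) * |x j| ^ (a j - 1) *
          ∏ i ∈ Finset.univ.erase j, |x i| ^ a i) * D) * D :=
        mul_le_mul_of_nonneg_right hnum_le hD.le
    _ = ((|(a j : ℝ) - 2 * m j| + a j) * |x j| ^ (a j - 1) *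
          ∏ i ∈ Finset.univ.erase j, |x i| ^ a i) * D ^ 2 := by ring
end
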